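/- Fix N ≥ 1, m ≥ 1, dimensions n_1,…,n_N ≥ 1, matrices A_i ∈ ℝ^{m×n_i}, b ∈ ℝ^m, convex f_i : ℝ^{n_i} → ℝ, ρ > 0, 0 < γ < 2, Δ > 0, ε_1,…,ε_N > 0, and symmetric matrices P_i ∈ ℝ^{n_i×n_i}. Let (x*, λ*) satisfy Σ_{i=1}^N A_i x_i* = b and L(x, λ*) ≥ L(x*, λ*) for all x. Let x_i, x_i⁺ ∈ ℝ^{n_i} and λ̂, λ̂⁺, d̂, d̂⁺ ∈ ℝ^m satisfy: (i) ‖d̂ − (Σ_i A_i x_i − b)‖ ≤ 2√m·Δ and ‖d̂⁺ − (Σ_i A_i x_i⁺ − b)‖ ≤ 2√m·Δ; (ii) λ̂⁺ = λ̂ + γρ·d̂⁺; (iii) for each i there is a subgradient g_i of f_i at x_i⁺ with g_i + A_iᵀλ̂ + ρ·A_iᵀ(A_i(x_i⁺ − x_i) + d̂) + P_i(x_i⁺ − x_i) = 0. Then 0 ≤ L(x⁺, λ*) − L(x*, λ*) ≤ V(x, λ̂) − V(x⁺, λ̂⁺) − Θ + E_Δ, where V(x, λ̂) := ½ Σ_i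 ‖x_i − x_i*‖²_{ρA_iᵀA_i + P_i} + (1/(2γρ))·‖λ̂ − λ*‖², Θ := ((2 − γ − Σ_i ε_i)/(2γ²ρ))·‖λ̂ − λ̂⁺‖² + ½ Σ_i ‖x_i − x_i⁺‖²_{ρA_iᵀA_i + P_i − (ρ/ε_i)A_iᵀA_i}, and E_Δ := (8/γ + 4|γ−1|/γ + 2)·√m·Δ·max(‖λ̂ − λ*‖, ‖λ̂⁺ − λ*‖) + 4ρ√m·Δ·max(‖d̂‖, ‖d̂⁺‖). -/

import Mathlib

/-!
The subgradient inequality at `x⁺` and the stationarity condition bound the Lagrangian gap by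
a dual term `⟪λ* - λ̂, r⁺⟫ - ρ⟪d̂, r⁺⟫` (with `r⁺ = ∑ Aᵢxᵢ⁺ - b = ∑ Aᵢ(xᵢ⁺ - xᵢ*)` by feasibility
of `x*`) minus a three-point expression in the metric `Mᵢ = ρAᵢᵀAᵢ + Pᵢ`. Writing
`r⁺ = d̂⁺ - (d̂⁺ - r⁺)`, the relaxed dual update turns `⟪λ* - λ̂, d̂⁺⟫` into a telescoping
difference of `‖λ̂ - λ*‖²`, and the coupling `ρ⟪r⁺ - r, d̂⁺⟫` is absorbed by Young's inequality
with weights `εᵢ`. The quantization errors `d̂ - r`, `d̂⁺ - r⁺` then enter only linearly and are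
bounded by Cauchy–Schwarz; for the term `ρ⟪(d̂⁺ - r⁺) - (d̂ - r), d̂⁺⟫` one uses
`ρd̂⁺ = (λ̂⁺ - λ̂)/γ`.
-/

open scoped RealInnerProductSpace

/-- Weighted squared seminorm `‖v‖²_M := vᵀ M v`. -/
noncomputable def wnormSq {k : ℕ} (M : Matrix (Fin k) (Fin k) ℝ)
    (v : EuclideanSpace ℝ (Fin k)) : ℝ :=
  dotProduct v (M.mulVec v)

/-- The Lagrangian `L(x, λ) := ∑_i f_i(x_i) + ⟨λ, ∑_i A_i x_i − b⟩`. -/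
noncomputable def Lag {N m : ℕ} {n : Fin N → ℕ}
    (f : ∀ i, EuclideanSpace ℝ (Fin (n i)) → ℝ)
    (A : ∀ i, Matrix (Fin m) (Fin (n i)) ℝ) (b : EuclideanSpace ℝ (Fin m))
    (x : ∀ i, EuclideanSpace ℝ (Fin (n i))) (lam : EuclideanSpace ℝ (Fin m)) : ℝ :=
  (∑ i, f i (x i))
    + ⟪lam, (∑ i, (WithLp.toLp 2 ((A i).mulVec (x i)))) - b⟫

/-- The gradient of the smooth part of the local proximal subproblem,
`Aᵀλ̂ + ρ·Aᵀ(A(xp − x) + d̂) + P(xp − x)`. -/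
noncomputable def gradTerm {m k : ℕ} (A : Matrix (Fin m) (Fin k) ℝ)
    (P : Matrix (Fin k) (Fin k) ℝ) (ρ : ℝ)
    (lamHat dHat : EuclideanSpace ℝ (Fin m))
    (x xp : EuclideanSpace ℝ (Fin k)) : EuclideanSpace ℝ (Fin k) :=
  WithLp.toLp 2 (A.transpose.mulVec lamHat
    + ρ • A.transpose.mulVec
        (A.mulVec (xp - x) + dHat)
    + P.mulVec (xp - x))

open Matrix WithLp

section WeightedNorm
variable {k : ℕ}

theorem wnormSq_sub_left (M₁ M₂ : Matrix (Fin k) (Fin k) ℝ) (v : EuclideanSpace ℝ (Fin k)) :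
    wnormSq (M₁ - M₂) v = wnormSq M₁ v - wnormSq M₂ v := by
  simp only [wnormSq, sub_mulVec, dotProduct_sub]

theorem wnormSq_smul_left (c : ℝ) (M : Matrix (Fin k) (Fin k) ℝ) (v : EuclideanSpace ℝ (Fin k)) :
    wnormSq (c • M) v = c * wnormSq M v := by
  simp only [wnormSq, smul_mulVec, dotProduct_smul, smul_eq_mul]

theorem wnormSq_neg (M : Matrix (Fin k) (Fin k) ℝ) (v : EuclideanSpace ℝ (Fin k)) :
    wnormSq M (-v) = wnormSq M v := by
  simp only [wnormSq, ofLp_neg, mulVec_neg, dotProduct_neg, neg_dotProduct, neg_neg]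

theorem wnormSq_sub_comm (M : Matrix (Fin k) (Fin k) ℝ) (a b : EuclideanSpace ℝ (Fin k)) :
    wnormSq M (a - b) = wnormSq M (b - a) := by
  rw [← neg_sub, wnormSq_neg]

theorem wnormSq_transpose_mul_self {m : ℕ} (A : Matrix (Fin m) (Fin k) ℝ)
    (v : EuclideanSpace ℝ (Fin k)) :
    wnormSq (Aᵀ * A) v = ‖toLp 2 (A *ᵥ ofLp v)‖ ^ 2 := by
  rw [← real_inner_self_eq_norm_sq, EuclideanSpace.inner_toLp_toLp, wnormSq, ← mulVec_mulVec,
    dotProduct_mulVec, vecMul_transpose, star_trivial]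

theorem Matrix.IsSymm.two_mul_dotProduct_mulVec_sub {M : Matrix (Fin k) (Fin k) ℝ} (hM : M.IsSymm)
    (a b c : EuclideanSpace ℝ (Fin k)) :
    2 * (ofLp (a - c) ⬝ᵥ M *ᵥ (ofLp a - ofLp b))
      = wnormSq M (a - c) - wnormSq M (b - c) + wnormSq M (a - b) := by
  have hsymm : ∀ u v : Fin k → ℝ, u ⬝ᵥ M *ᵥ v = v ⬝ᵥ M *ᵥ u := fun u v => by
    rw [dotProduct_mulVec, ← mulVec_transpose, hM.eq, dotProduct_comm]
  simp only [wnormSq, ofLp_sub, mulVec_sub, dotProduct_sub, sub_dotProduct]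
  rw [hsymm (ofLp b) (ofLp a), hsymm (ofLp c) (ofLp a), hsymm (ofLp c) (ofLp b)]
  ring

end WeightedNorm

section InnerProduct
variable {E : Type*} [NormedAddCommGroup E] [InnerProductSpace ℝ E]

theorem two_mul_inner_le_div_add_mul (u v : E) {ε : ℝ} (hε : 0 < ε) :
    2 * ⟪u, v⟫ ≤ ‖u‖ ^ 2 / ε + ε * ‖v‖ ^ 2 := by
  have h := norm_sub_sq_real u (ε • v)
  rw [real_inner_smul_right, norm_smul, Real.norm_of_nonneg hε.le] at h
  rw [div_add' _ _ _ hε.ne', le_div_iff₀ hε]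
  nlinarith [sq_nonneg ‖u - ε • v‖]

theorem two_mul_inner_sum_le_sum_div_add_mul {ι : Type*} (s : Finset ι) (u : ι → E) (v : E)
    {ε : ι → ℝ} (hε : ∀ i ∈ s, 0 < ε i) :
    2 * ⟪∑ i ∈ s, u i, v⟫ ≤ ∑ i ∈ s, ‖u i‖ ^ 2 / ε i + (∑ i ∈ s, ε i) * ‖v‖ ^ 2 := by
  rw [sum_inner, Finset.mul_sum, Finset.sum_mul, ← Finset.sum_add_distrib]
  exact Finset.sum_le_sum fun i hi => two_mul_inner_le_div_add_mul (u i) v (hε i hi)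

variable {ρ γ δ : ℝ} {lam lamP lamStar d dP r rP : E}

theorem inner_sub_eq_of_dual_update (hγ : γ ≠ 0) (hρ : ρ ≠ 0) (hdual : lamP = lam + (γ * ρ) • dP) :
    ⟪lamStar - lam, rP⟫ - ρ * ⟪d, rP⟫
      = (‖lam - lamStar‖ ^ 2 - ‖lamP - lamStar‖ ^ 2) / (2 * γ * ρ)
        - ρ * (2 - γ) / 2 * ‖dP‖ ^ 2 + ρ * ⟪rP - r, dP⟫
        + (⟪lam - lamStar, dP - rP⟫ + ρ * ⟪d, dP - rP⟫ + ρ * ⟪(dP - rP) - (d - r), dP⟫) := by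
  have hnorm : ‖lamP - lamStar‖ ^ 2
      = ‖lam - lamStar‖ ^ 2 + 2 * (γ * ρ) * ⟪lam - lamStar, dP⟫ + (γ * ρ) ^ 2 * ‖dP‖ ^ 2 := by
    rw [hdual, add_sub_right_comm, norm_add_sq_real, real_inner_smul_right, norm_smul,
      mul_pow, Real.norm_eq_abs, sq_abs]
    ring
  rw [hnorm]
  simp only [inner_sub_left, inner_sub_right, real_inner_self_eq_norm_sq]
  field_simp
  ring

theorem inner_sub_le_of_dual_update (hγ : 0 < γ) (hρ : 0 < ρ) (hd : ‖d - r‖ ≤ δ)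
    (hdP : ‖dP - rP‖ ≤ δ) (hdual : lamP = lam + (γ * ρ) • dP) :
    ⟪lamStar - lam, rP⟫ - ρ * ⟪d, rP⟫
      ≤ (‖lam - lamStar‖ ^ 2 - ‖lamP - lamStar‖ ^ 2) / (2 * γ * ρ)
        - ρ * (2 - γ) / 2 * ‖dP‖ ^ 2 + ρ * ⟪rP - r, dP⟫
        + δ * ((4 / γ + 1) * max ‖lam - lamStar‖ ‖lamP - lamStar‖ + ρ * ‖d‖) := by
  set Λ := max ‖lam - lamStar‖ ‖lamP - lamStar‖
  have hδ : 0 ≤ δ := (norm_nonneg _).trans hd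
  have hstep : ‖lamP - lam‖ ≤ 2 * Λ := by
    have := norm_sub_le_norm_sub_add_norm_sub lamP lamStar lam
    rw [norm_sub_rev lamStar] at this
    linarith [le_max_left ‖lam - lamStar‖ ‖lamP - lamStar‖,
      le_max_right ‖lam - lamStar‖ ‖lamP - lamStar‖]
  have herr₁ : ⟪lam - lamStar, dP - rP⟫ ≤ Λ * δ :=
    (real_inner_le_norm _ _).trans (mul_le_mul (le_max_left _ _) hdP (norm_nonneg _)
      ((norm_nonneg _).trans (le_max_left _ _)))
  have herr₂ : ⟪d, dP - rP⟫ ≤ ‖d‖ * δ :=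
    (real_inner_le_norm _ _).trans (mul_le_mul_of_nonneg_left hdP (norm_nonneg _))
  have hscale : ρ * ⟪(dP - rP) - (d - r), dP⟫ = ⟪(dP - rP) - (d - r), lamP - lam⟫ / γ := by
    rw [hdual, add_sub_cancel_left, real_inner_smul_right]
    field_simp
  have herr₃ : ρ * ⟪(dP - rP) - (d - r), dP⟫ ≤ 4 / γ * Λ * δ := by
    have hdiff : ‖(dP - rP) - (d - r)‖ ≤ 2 * δ := by linarith [norm_sub_le (dP - rP) (d - r)]
    calc ρ * ⟪(dP - rP) - (d - r), dP⟫
        ≤ 2 * δ * (2 * Λ) / γ := by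
          rw [hscale]
          gcongr
          exact (real_inner_le_norm _ _).trans
            (mul_le_mul hdiff hstep (norm_nonneg _) (by positivity))
      _ = 4 / γ * Λ * δ := by ring
  have herr₂' : ρ * ⟪d, dP - rP⟫ ≤ ρ * (‖d‖ * δ) := mul_le_mul_of_nonneg_left herr₂ hρ.le
  rw [inner_sub_eq_of_dual_update (r := r) hγ.ne' hρ.ne' hdual]
  linarith

end InnerProduct

theorem inner_gradTerm {m k : ℕ} (A : Matrix (Fin m) (Fin k) ℝ) (P : Matrix (Fin k) (Fin k) ℝ)
    (ρ : ℝ) (lamHat dHat : EuclideanSpace ℝ (Fin m)) (x xp y : EuclideanSpace ℝ (Fin k)) :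
    ⟪gradTerm A P ρ lamHat dHat x xp, y⟫
      = ⟪lamHat, toLp 2 (A *ᵥ ofLp y)⟫ + ρ * ⟪dHat, toLp 2 (A *ᵥ ofLp y)⟫
        + ofLp y ⬝ᵥ (ρ • (Aᵀ * A) + P) *ᵥ (ofLp xp - ofLp x) := by
  have hadj : ∀ w : Fin m → ℝ, ofLp y ⬝ᵥ Aᵀ *ᵥ w = w ⬝ᵥ A *ᵥ ofLp y := fun w => by
    rw [dotProduct_mulVec, vecMul_transpose, dotProduct_comm]
  simp only [gradTerm, EuclideanSpace.inner_eq_star_dotProduct, star_trivial, add_mulVec,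
    smul_mulVec, ← mulVec_mulVec, mulVec_add, dotProduct_add, dotProduct_smul, smul_eq_mul, hadj]
  rw [dotProduct_comm (ofLp lamHat), dotProduct_comm (ofLp dHat)]
  ring

theorem sub_le_of_subgradient_of_gradTerm {m k : ℕ} {A : Matrix (Fin m) (Fin k) ℝ}
    {P : Matrix (Fin k) (Fin k) ℝ} (hP : P.IsSymm) {ρ : ℝ} {lamHat dHat : EuclideanSpace ℝ (Fin m)}
    {φ : EuclideanSpace ℝ (Fin k) → ℝ} {x xp g : EuclideanSpace ℝ (Fin k)}
    (hsub : ∀ z, φ xp + ⟪g, z - xp⟫ ≤ φ z) (hstat : g + gradTerm A P ρ lamHat dHat x xp = 0)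
    (xs : EuclideanSpace ℝ (Fin k)) :
    φ xp - φ xs ≤ -⟪lamHat, toLp 2 (A *ᵥ ofLp (xp - xs))⟫
      - ρ * ⟪dHat, toLp 2 (A *ᵥ ofLp (xp - xs))⟫
      - (wnormSq (ρ • (Aᵀ * A) + P) (xp - xs) - wnormSq (ρ • (Aᵀ * A) + P) (x - xs)
        + wnormSq (ρ • (Aᵀ * A) + P) (xp - x)) / 2 := by
  have hM : (ρ • (Aᵀ * A) + P).IsSymm :=
    ((show (Aᵀ * A).IsSymm by simp [Matrix.IsSymm, transpose_mul]).smul ρ).add hP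
  have hg : ⟪g, xs - xp⟫ = ⟪gradTerm A P ρ lamHat dHat x xp, xp - xs⟫ := by
    rw [eq_neg_of_add_eq_zero_left hstat, ← neg_sub xp xs, inner_neg_neg]
  have hsub_xs := hsub xs
  have hthree := hM.two_mul_dotProduct_mulVec_sub xp x xs
  rw [hg, inner_gradTerm] at hsub_xs
  linarith

section Blocks
variable {N m : ℕ} {n : Fin N → ℕ}

theorem sum_toLp_mulVec_sub (A : ∀ i, Matrix (Fin m) (Fin (n i)) ℝ) (b : EuclideanSpace ℝ (Fin m))
    (y z : ∀ i, EuclideanSpace ℝ (Fin (n i))) :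
    ∑ i, toLp 2 (A i *ᵥ ofLp (y i - z i))
      = (∑ i, toLp 2 (A i *ᵥ ofLp (y i)) - b) - (∑ i, toLp 2 (A i *ᵥ ofLp (z i)) - b) := by
  simp only [ofLp_sub, mulVec_sub, toLp_sub, Finset.sum_sub_distrib, sub_sub_sub_cancel_right]

theorem lag_sub_le_of_subgradient_of_gradTerm (f : ∀ i, EuclideanSpace ℝ (Fin (n i)) → ℝ)
    {A : ∀ i, Matrix (Fin m) (Fin (n i)) ℝ} {b : EuclideanSpace ℝ (Fin m)}
    {P : ∀ i, Matrix (Fin (n i)) (Fin (n i)) ℝ} (hP : ∀ i, (P i).IsSymm) {ρ : ℝ}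
    {xs : ∀ i, EuclideanSpace ℝ (Fin (n i))} (hfeas : ∑ i, toLp 2 (A i *ᵥ ofLp (xs i)) = b)
    (lamStar : EuclideanSpace ℝ (Fin m)) {x xp g : ∀ i, EuclideanSpace ℝ (Fin (n i))}
    {lamHat dHat : EuclideanSpace ℝ (Fin m)}
    (hsubgrad : ∀ i, ∀ z, f i (xp i) + ⟪g i, z - xp i⟫ ≤ f i z)
    (hstat : ∀ i, g i + gradTerm (A i) (P i) ρ lamHat dHat (x i) (xp i) = 0) :
    Lag f A b xp lamStar - Lag f A b xs lamStar
      ≤ ⟪lamStar - lamHat, ∑ i, toLp 2 (A i *ᵥ ofLp (xp i)) - b⟫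
        - ρ * ⟪dHat, ∑ i, toLp 2 (A i *ᵥ ofLp (xp i)) - b⟫
        - (∑ i, wnormSq (ρ • ((A i)ᵀ * A i) + P i) (xp i - xs i)
          - ∑ i, wnormSq (ρ • ((A i)ᵀ * A i) + P i) (x i - xs i)
          + ∑ i, wnormSq (ρ • ((A i)ᵀ * A i) + P i) (xp i - x i)) / 2 := by
  have hres : ∑ i, toLp 2 (A i *ᵥ ofLp (xp i - xs i)) = ∑ i, toLp 2 (A i *ᵥ ofLp (xp i)) - b := by
    rw [sum_toLp_mulVec_sub A b, hfeas, sub_self, sub_zero]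
  have hblocks := Finset.sum_le_sum fun i (_ : i ∈ Finset.univ) =>
    sub_le_of_subgradient_of_gradTerm (hP i) (hsubgrad i) (hstat i) (xs i)
  simp only [Finset.sum_sub_distrib, Finset.sum_neg_distrib, ← inner_sum, ← Finset.mul_sum,
    ← Finset.sum_div, Finset.sum_add_distrib, hres] at hblocks
  simp only [Lag, hfeas, sub_self, inner_zero_right, inner_sub_left]
  linarith

end Blocks

theorem quantization_error_le {ρ γ s Λ a c : ℝ} (hρ : 0 < ρ) (hγ : 0 < γ) (hs : 0 ≤ s)
    (hΛ : 0 ≤ Λ) (ha : 0 ≤ a) (hac : a ≤ c) :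
    2 * s * ((4 / γ + 1) * Λ + ρ * a) ≤ (8 / γ + 4 * |γ - 1| / γ + 2) * s * Λ + 4 * ρ * s * c := by
  have hca : 0 ≤ c - a := sub_nonneg.2 hac
  have : 0 ≤ 4 * |γ - 1| / γ * s * Λ + 2 * ρ * s * (c - a) + 2 * ρ * s * c := by
    have : 0 ≤ c := ha.trans hac
    positivity
  linear_combination this

theorem per_iteration_descent_general
    (N m : ℕ)
    (n : Fin N → ℕ)
    (A : ∀ i, Matrix (Fin m) (Fin (n i)) ℝ)
    (b : EuclideanSpace ℝ (Fin m))
    (f : ∀ i, EuclideanSpace ℝ (Fin (n i)) → ℝ)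
    (ρ γ Δ : ℝ) (hρ : 0 < ρ) (hγ₀ : 0 < γ)
    (ε : Fin N → ℝ) (hε : ∀ i, 0 < ε i)
    (P : ∀ i, Matrix (Fin (n i)) (Fin (n i)) ℝ)
    (hPsymm : ∀ i, (P i).IsSymm)
    (xs : ∀ i, EuclideanSpace ℝ (Fin (n i)))
    (lamStar : EuclideanSpace ℝ (Fin m))
    (hfeas : (∑ i, (WithLp.toLp 2 ((A i).mulVec (xs i)))) = b)
    (hsaddle : ∀ x : ∀ i, EuclideanSpace ℝ (Fin (n i)),
      Lag f A b xs lamStar ≤ Lag f A b x lamStar)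
    (x xp : ∀ i, EuclideanSpace ℝ (Fin (n i)))
    (lamHat lamHatP dHat dHatP : EuclideanSpace ℝ (Fin m))
    (hd : ‖dHat - ((∑ i, (WithLp.toLp 2 ((A i).mulVec (x i)))) - b)‖
            ≤ 2 * Real.sqrt m * Δ)
    (hdP : ‖dHatP - ((∑ i, (WithLp.toLp 2 ((A i).mulVec (xp i)))) - b)‖
            ≤ 2 * Real.sqrt m * Δ)
    (hdual : lamHatP = lamHat + (γ * ρ) • dHatP)
    (g : ∀ i, EuclideanSpace ℝ (Fin (n i)))
    (hsubgrad : ∀ i, ∀ z, f i (xp i) + ⟪g i, z - xp i⟫ ≤ f i z)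
    (hstat : ∀ i, g i + gradTerm (A i) (P i) ρ lamHat dHat (x i) (xp i) = 0) :
    0 ≤ Lag f A b xp lamStar - Lag f A b xs lamStar ∧
    Lag f A b xp lamStar - Lag f A b xs lamStar
      ≤ ((1 / 2) * ∑ i, wnormSq (ρ • ((A i).transpose * A i) + P i) (x i - xs i)
            + (1 / (2 * γ * ρ)) * ‖lamHat - lamStar‖ ^ 2)
        - ((1 / 2) * ∑ i, wnormSq (ρ • ((A i).transpose * A i) + P i) (xp i - xs i)
            + (1 / (2 * γ * ρ)) * ‖lamHatP - lamStar‖ ^ 2)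
        - (((2 - γ - ∑ i, ε i) / (2 * γ ^ 2 * ρ)) * ‖lamHat - lamHatP‖ ^ 2
            + (1 / 2) * ∑ i,
                wnormSq
                  (ρ • ((A i).transpose * A i) + P i
                    - (ρ / ε i) • ((A i).transpose * A i))
                  (x i - xp i))
        + ((8 / γ + 4 * |γ - 1| / γ + 2) * Real.sqrt m * Δ
              * max ‖lamHat - lamStar‖ ‖lamHatP - lamStar‖
            + 4 * ρ * Real.sqrt m * Δ * max ‖dHat‖ ‖dHatP‖) := by
  refine ⟨sub_nonneg.2 (hsaddle xp), ?_⟩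
  have hprimal := lag_sub_le_of_subgradient_of_gradTerm f hPsymm hfeas lamStar hsubgrad hstat
  have hdualstep := inner_sub_le_of_dual_update (lamStar := lamStar) hγ₀ hρ hd hdP hdual
  have hyoung := mul_le_mul_of_nonneg_left (two_mul_inner_sum_le_sum_div_add_mul Finset.univ
    (fun i => toLp 2 (A i *ᵥ ofLp (xp i - x i))) dHatP fun i _ => hε i) hρ.le
  rw [sum_toLp_mulVec_sub A b] at hyoung
  have hsplit : ∑ i, wnormSq (ρ • ((A i)ᵀ * A i) + P i - (ρ / ε i) • ((A i)ᵀ * A i)) (x i - xp i)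
      = ∑ i, wnormSq (ρ • ((A i)ᵀ * A i) + P i) (xp i - x i)
        - ρ * ∑ i, ‖toLp 2 (A i *ᵥ ofLp (xp i - x i))‖ ^ 2 / ε i := by
    rw [Finset.mul_sum, ← Finset.sum_sub_distrib]
    refine Finset.sum_congr rfl fun i _ => ?_
    rw [wnormSq_sub_comm, wnormSq_sub_left, wnormSq_smul_left, wnormSq_transpose_mul_self]
    ring
  have hquad : ρ * (2 - γ - ∑ i, ε i) / 2 * ‖dHatP‖ ^ 2
      = (2 - γ - ∑ i, ε i) / (2 * γ ^ 2 * ρ) * ‖lamHat - lamHatP‖ ^ 2 := by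
    rw [hdual, sub_add_cancel_left, norm_neg, norm_smul, Real.norm_of_nonneg (by positivity)]
    field_simp
  have hs : 0 ≤ Real.sqrt m * Δ := by linarith [(norm_nonneg _).trans hd]
  have herr := quantization_error_le hρ hγ₀ hs
    ((norm_nonneg (lamHat - lamStar)).trans (le_max_left _ ‖lamHatP - lamStar‖))
    (norm_nonneg dHat) (le_max_left _ ‖dHatP‖)
  linear_combination hprimal + hdualstep + hyoung / 2 + hsplit / 2 - hquad + herr

/-- **Per-iteration descent inequality (eq. (30)).**  Under the quantized
residual accuracy (i), the relaxed dual update (ii), and the first-order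
optimality conditions (iii), one has
`0 ≤ L(x⁺, λ*) − L(x*, λ*) ≤ V(x, λ̂) − V(x⁺, λ̂⁺) − Θ + E_Δ`. -/
theorem per_iteration_descent
    (N m : ℕ) (hN : 1 ≤ N) (hm : 1 ≤ m)
    (n : Fin N → ℕ) (hn : ∀ i, 1 ≤ n i)
    (A : ∀ i, Matrix (Fin m) (Fin (n i)) ℝ)
    (b : EuclideanSpace ℝ (Fin m))
    (f : ∀ i, EuclideanSpace ℝ (Fin (n i)) → ℝ)
    (hf : ∀ i, ConvexOn ℝ Set.univ (f i))
    (ρ γ Δ : ℝ) (hρ : 0 < ρ) (hγ₀ : 0 < γ) (hγ₂ : γ < 2) (hΔ : 0 < Δ)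
    (ε : Fin N → ℝ) (hε : ∀ i, 0 < ε i)
    (P : ∀ i, Matrix (Fin (n i)) (Fin (n i)) ℝ)
    (hPsymm : ∀ i, (P i).IsSymm)
    (xs : ∀ i, EuclideanSpace ℝ (Fin (n i)))
    (lamStar : EuclideanSpace ℝ (Fin m))
    (hfeas : (∑ i, (WithLp.toLp 2 ((A i).mulVec (xs i)))) = b)
    (hsaddle : ∀ x : ∀ i, EuclideanSpace ℝ (Fin (n i)),
      Lag f A b xs lamStar ≤ Lag f A b x lamStar)
    (x xp : ∀ i, EuclideanSpace ℝ (Fin (n i)))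
    (lamHat lamHatP dHat dHatP : EuclideanSpace ℝ (Fin m))
    (hd : ‖dHat - ((∑ i, (WithLp.toLp 2 ((A i).mulVec (x i)))) - b)‖
            ≤ 2 * Real.sqrt m * Δ)
    (hdP : ‖dHatP - ((∑ i, (WithLp.toLp 2 ((A i).mulVec (xp i)))) - b)‖
            ≤ 2 * Real.sqrt m * Δ)
    (hdual : lamHatP = lamHat + (γ * ρ) • dHatP)
    (g : ∀ i, EuclideanSpace ℝ (Fin (n i)))
    (hsubgrad : ∀ i, ∀ z, f i (xp i) + ⟪g i, z - xp i⟫ ≤ f i z)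
    (hstat : ∀ i, g i + gradTerm (A i) (P i) ρ lamHat dHat (x i) (xp i) = 0) :
    0 ≤ Lag f A b xp lamStar - Lag f A b xs lamStar ∧
    Lag f A b xp lamStar - Lag f A b xs lamStar
      ≤ ((1 / 2) * ∑ i, wnormSq (ρ • ((A i).transpose * A i) + P i) (x i - xs i)
            + (1 / (2 * γ * ρ)) * ‖lamHat - lamStar‖ ^ 2)
        - ((1 / 2) * ∑ i, wnormSq (ρ • ((A i).transpose * A i) + P i) (xp i - xs i)
            + (1 / (2 * γ * ρ)) * ‖lamHatP - lamStar‖ ^ 2)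
        - (((2 - γ - ∑ i, ε i) / (2 * γ ^ 2 * ρ)) * ‖lamHat - lamHatP‖ ^ 2
            + (1 / 2) * ∑ i,
                wnormSq
                  (ρ • ((A i).transpose * A i) + P i
                    - (ρ / ε i) • ((A i).transpose * A i))
                  (x i - xp i))
        + ((8 / γ + 4 * |γ - 1| / γ + 2) * Real.sqrt m * Δ
              * max ‖lamHat - lamStar‖ ‖lamHatP - lamStar‖
            + 4 * ρ * Real.sqrt m * Δ * max ‖dHat‖ ‖dHatP‖) :=
  per_iteration_descent_general N m n A b f ρ γ Δ hρ hγ₀ ε hε P hPsymm xs lamStar hfeas hsaddle x xp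
    lamHat lamHatP dHat dHatP hd hdP hdual g hsubgrad hstat
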